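/- Define the deterministic finite automaton with output M as follows: its state set is {?,0,1}, its initial state is ?, its input alphabet is A × {0,1,2}, its transition function δ satisfies δ(?, (g,e)) = (the symbol at position e of the pattern g) for every g ∈ A and e ∈ {0,1,2}, and δ(b, (g,e)) = b for every b ∈ {0,1}, g ∈ A, e ∈ {0,1,2}; the output of a state is the state itself. Then for every r ≥ 0, every word t = t_0 t_1 ⋯ t_{r-1} over A, and all digits e_0, e_1, …, e_{r-1} ∈ {0,1,2}, setting n = Σ_{0 ≤ i < r} e_i 3^i, the state reached by M from ? on reading the input word (t_0,e_0)(t_1,e_1)⋯(t_{r-1},e_{r-1}) equals T(t)[n]. -/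

import Mathlib

/-- The alphabet B = {0, 1, ?}. -/
inductive B : Type
  | b0 : B
  | b1 : B
  | bq : B
deriving DecidableEq, Inhabited, Repr

/-- The six Stewart patterns a = 01?, b = 10?, c = 0?1, d = 1?0, e = ?01, f = ?10. -/
inductive A : Type
  | a : A
  | b : A
  | c : A
  | d : A
  | e : A
  | f : A
deriving DecidableEq, Inhabited, Repr

open B in
/-- The length-3 word over B associated with a Stewart pattern. -/
def pat : A → List B
  | .a => [b0, b1, bq]
  | .b => [b1, b0, bq]
  | .c => [b0, bq, b1]
  | .d => [b1, bq, b0]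
  | .e => [bq, b0, b1]
  | .f => [bq, b1, b0]

/-- Replace the occurrences of `?` in the first word, in order,
by the symbols of the second word. -/
def fill : List B → List B → List B
  | [], _ => []
  | B.bq :: rest, s :: ss => s :: fill rest ss
  | B.bq :: rest, [] => B.bq :: fill rest []
  | x :: rest, ss => x :: fill rest ss

/-- Helper: the finite Stewart word of the *reverse* of `t`. -/
def Trev : List A → List B
  | [] => [B.bq]
  | g :: t => fill (Trev t ++ Trev t ++ Trev t) (pat g)

/-- The finite Stewart word `T(t)`, of length `3 ^ t.length`:
`T(ε) = ?`, and `T(t g)` is obtained from `T(t)T(t)T(t)` by replacing its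
three occurrences of `?`, in order, by the three symbols of the pattern `g`. -/
def stewT (t : List A) : List B := Trev t.reverse

/-- The length-`r` prefix of an infinite sequence of Stewart patterns, as a list. -/
def prefT (t : ℕ → A) (r : ℕ) : List A := List.ofFn (fun i : Fin r => t i)

/-- The infinite Stewart word `T(𝐭)`: its symbol at position `n` is the eventual
value of `T(t_0 ⋯ t_{r-1})[n]` as `r → ∞`. -/
noncomputable def stewInf (t : ℕ → A) (n : ℕ) : B :=
  Classical.epsilon (fun v : B => ∃ R : ℕ, ∀ r ≥ R, (stewT (prefT t r)).getD n B.bq = v)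

/-- `w` occurs as a factor of the infinite word `x`. -/
def FactorOf (w : List B) (x : ℕ → B) : Prop :=
  ∃ i : ℕ, ∀ j : ℕ, j < w.length → w.getD j B.bq = x (i + j)

/-- `w` has period `p ≥ 1`: `w[i] = w[i+p]` for all `0 ≤ i < |w| - p`. -/
def HasPeriod (w : List B) (p : ℕ) : Prop :=
  1 ≤ p ∧ ∀ i : ℕ, i + p < w.length → w.getD i B.bq = w.getD (i + p) B.bq

/-- The least period `per(w)` of a word. -/
noncomputable def leastPeriod (w : List B) : ℕ := sInf {p | HasPeriod w p}

/-- The exponent `exp(w) = |w| / per(w)` of a word. -/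
noncomputable def expo (w : List B) : ℝ := (w.length : ℝ) / (leastPeriod w : ℝ)

/-- The Hamming distance between two Stewart patterns: the number of positions
`p ∈ {0,1,2}` at which the length-3 words differ. -/
def ham (g h : A) : ℕ :=
  (Finset.univ.filter fun p : Fin 3 => (pat g).getD p B.bq ≠ (pat h).getD p B.bq).card

/-- `t` is ultimately periodic. -/
def UltPeriodic (t : ℕ → A) : Prop :=
  ∃ N : ℕ, ∃ p : ℕ, 1 ≤ p ∧ ∀ n ≥ N, t (n + p) = t n

/-- An infinite word `x` is 3-automatic: there is a finite automaton with output,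
reading base-3 representations least-significant-digit first (trailing zeros
allowed), computing `x`. -/
def IsThreeAutomatic (x : ℕ → B) : Prop :=
  ∃ (Q : Type) (_ : Finite Q) (δ : Q → Fin 3 → Q) (q0 : Q) (τ : Q → B),
    ∀ (r : ℕ) (e : Fin r → Fin 3),
      τ (List.foldl δ q0 (List.ofFn fun i => e i)) =
        x (∑ i : Fin r, (e i).val * 3 ^ (i : ℕ))

/-- The transition function of the Stewart automaton `M`, with state set
`B = {?, 0, 1}` and input alphabet `A × {0,1,2}`:
`δ(?, (g,e))` is the symbol at position `e` of the pattern `g`, and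
`δ(b, (g,e)) = b` for boolean states `b ∈ {0,1}`. -/
def delta : B → A × Fin 3 → B
  | B.bq, (g, e) => (pat g).getD e.val B.bq
  | s, _ => s

-- Auxiliary lemmas ----------------------------------------------------------

lemma fill_nil (s : List B) : fill [] s = [] := rfl

lemma fill_cons_ne (x : B) (hx : x ≠ B.bq) (w : List B) (s : List B) :
    fill (x :: w) s = x :: fill w s := by
  cases x <;> cases s <;> first | rfl | exact absurd rfl hx

lemma fill_cons_q (w : List B) (s : B) (ss : List B) :
    fill (B.bq :: w) (s :: ss) = s :: fill w ss := rfl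

lemma fill_no_q (v : List B) (hv : B.bq ∉ v) (s : List B) : fill v s = v := by
  induction v with
  | nil => cases s <;> rfl
  | cons x xs ih =>
    have hx : x ≠ B.bq := fun h => hv (h ▸ (List.mem_cons_self : x ∈ x :: xs))
    have hxs : B.bq ∉ xs := fun h => hv (List.mem_cons_of_mem _ h)
    rw [fill_cons_ne x hx, ih hxs]

lemma fill_append_not_mem (u : List B) (hu : B.bq ∉ u) (w s : List B) :
    fill (u ++ w) s = u ++ fill w s := by
  induction u with
  | nil => rfl
  | cons x xs ih =>
    have hx : x ≠ B.bq := fun h => hu (h ▸ (List.mem_cons_self : x ∈ x :: xs))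
    have hxs : B.bq ∉ xs := fun h => hu (List.mem_cons_of_mem _ h)
    simp only [List.cons_append, fill_cons_ne x hx, ih hxs]

lemma fill_three (u v : List B) (hu : B.bq ∉ u) (hv : B.bq ∉ v) (s0 s1 s2 : B) :
    fill ((u ++ B.bq :: v) ++ (u ++ B.bq :: v) ++ (u ++ B.bq :: v)) [s0, s1, s2] =
      (u ++ s0 :: v) ++ (u ++ s1 :: v) ++ (u ++ s2 :: v) := by
  have key : ∀ (w : List B) (s : B) (ss : List B),
      fill ((u ++ B.bq :: v) ++ w) (s :: ss) = (u ++ s :: v) ++ fill w ss := by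
    intro w s ss
    rw [List.append_assoc, fill_append_not_mem u hu]
    show u ++ fill ((B.bq :: v) ++ w) (s :: ss) = _
    rw [List.cons_append, fill_cons_q, fill_append_not_mem v hv]
    simp [List.append_assoc]
  rw [List.append_assoc, key, key]
  have h2 : fill (u ++ B.bq :: v) [s2] = u ++ s2 :: v := by
    rw [fill_append_not_mem u hu]
    show u ++ fill (B.bq :: v) [s2] = _
    rw [fill_cons_q, fill_no_q v hv]
  rw [h2]
  simp [List.append_assoc]

lemma getD_blocks (x y z : List B) (L m ev : ℕ) (hx : x.length = L)
    (hy : y.length = L) (hz : z.length = L) (hm : m < L) (hev : ev < 3) :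
    (x ++ y ++ z).getD (m + ev * L) B.bq =
      (if ev = 0 then x else if ev = 1 then y else z).getD m B.bq := by
  rw [List.append_assoc]
  interval_cases ev
  · rw [List.getD_append _ _ _ _ (by omega)]; simp
  · rw [List.getD_append_right _ _ _ _ (by omega),
      show m + 1 * L - x.length = m by omega,
      List.getD_append _ _ _ _ (by omega)]
    simp
  · rw [List.getD_append_right _ _ _ _ (by omega),
      show m + 2 * L - x.length = m + L by omega,
      List.getD_append_right _ _ _ _ (by omega),
      show m + L - y.length = m by omega]
    simp

/-- structural invariant of `Trev`. -/
lemma Trev_struct (t : List A) :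
    ∃ u v : List B, Trev t = u ++ B.bq :: v ∧ B.bq ∉ u ∧ B.bq ∉ v ∧
      u.length + (v.length + 1) = 3 ^ t.length := by
  induction t with
  | nil => exact ⟨[], [], rfl, by simp, by simp, by simp⟩
  | cons g t ih =>
    obtain ⟨u, v, hW, hu, hv, hlen⟩ := ih
    have hTrev : Trev (g :: t) = fill ((u ++ B.bq :: v) ++ (u ++ B.bq :: v) ++ (u ++ B.bq :: v)) (pat g) := by
      rw [Trev, hW]
    have hlen' : 3 ^ (g :: t).length = 3 * 3 ^ t.length := by
      simp [pow_succ, mul_comm]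
    cases g
    case a =>
      refine ⟨(u ++ B.b0 :: v) ++ (u ++ B.b1 :: v) ++ u, v, ?_, ?_, hv, ?_⟩
      · rw [hTrev]; show _ = _
        rw [show pat A.a = [B.b0, B.b1, B.bq] from rfl, fill_three u v hu hv]
        simp [List.append_assoc]
      · simp [hu, hv]
      · simp only [List.length_append, List.length_cons]; omega
    case b =>
      refine ⟨(u ++ B.b1 :: v) ++ (u ++ B.b0 :: v) ++ u, v, ?_, ?_, hv, ?_⟩
      · rw [hTrev, show pat A.b = [B.b1, B.b0, B.bq] from rfl, fill_three u v hu hv]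
        simp [List.append_assoc]
      · simp [hu, hv]
      · simp only [List.length_append, List.length_cons]; omega
    case c =>
      refine ⟨(u ++ B.b0 :: v) ++ u, v ++ (u ++ B.b1 :: v), ?_, ?_, ?_, ?_⟩
      · rw [hTrev, show pat A.c = [B.b0, B.bq, B.b1] from rfl, fill_three u v hu hv]
        simp [List.append_assoc]
      · simp [hu, hv]
      · simp [hu, hv]
      · simp only [List.length_append, List.length_cons]; omega
    case d =>
      refine ⟨(u ++ B.b1 :: v) ++ u, v ++ (u ++ B.b0 :: v), ?_, ?_, ?_, ?_⟩
      · rw [hTrev, show pat A.d = [B.b1, B.bq, B.b0] from rfl, fill_three u v hu hv]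
        simp [List.append_assoc]
      · simp [hu, hv]
      · simp [hu, hv]
      · simp only [List.length_append, List.length_cons]; omega
    case e =>
      refine ⟨u, v ++ (u ++ B.b0 :: v) ++ (u ++ B.b1 :: v), ?_, hu, ?_, ?_⟩
      · rw [hTrev, show pat A.e = [B.bq, B.b0, B.b1] from rfl, fill_three u v hu hv]
        simp [List.append_assoc]
      · simp [hu, hv]
      · simp only [List.length_append, List.length_cons]; omega
    case f =>
      refine ⟨u, v ++ (u ++ B.b1 :: v) ++ (u ++ B.b0 :: v), ?_, hu, ?_, ?_⟩
      · rw [hTrev, show pat A.f = [B.bq, B.b1, B.b0] from rfl, fill_three u v hu hv]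
        simp [List.append_assoc]
      · simp [hu, hv]
      · simp only [List.length_append, List.length_cons]; omega

lemma delta_ne (s : B) (hs : s ≠ B.bq) (p : A × Fin 3) : delta s p = s := by
  cases s <;> first | rfl | exact absurd rfl hs

lemma delta_bq (g : A) (e : Fin 3) : delta B.bq (g, e) = (pat g).getD e.val B.bq := rfl

lemma pat_eq (g : A) : pat g = [(pat g).getD 0 B.bq, (pat g).getD 1 B.bq, (pat g).getD 2 B.bq] := by
  cases g <;> rfl

/-- key step lemma -/
lemma Trev_getD_step (t : List A) (g : A) (m : ℕ) (e : Fin 3)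
    (hm : m < 3 ^ t.length) :
    (Trev (g :: t)).getD (m + e.val * 3 ^ t.length) B.bq =
      delta ((Trev t).getD m B.bq) (g, e) := by
  obtain ⟨u, v, hW, hu, hv, hlen⟩ := Trev_struct t
  set L := 3 ^ t.length with hL
  set s0 := (pat g).getD 0 B.bq
  set s1 := (pat g).getD 1 B.bq
  set s2 := (pat g).getD 2 B.bq
  have hfill : Trev (g :: t) = (u ++ s0 :: v) ++ (u ++ s1 :: v) ++ (u ++ s2 :: v) := by
    rw [Trev, hW, pat_eq g, fill_three u v hu hv]
  have hBlen : ∀ s : B, (u ++ s :: v).length = L := by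
    intro s; simp only [List.length_append, List.length_cons]; omega
  -- reduce to one block
  have hblock : (Trev (g :: t)).getD (m + e.val * L) B.bq =
      (u ++ (if e.val = 0 then s0 else if e.val = 1 then s1 else s2) :: v).getD m B.bq := by
    rw [hfill, getD_blocks _ _ _ L m e.val (hBlen s0) (hBlen s1) (hBlen s2) hm e.isLt]
    rcases e with ⟨ev, he⟩
    interval_cases ev <;> rfl
  rw [hblock, hW]
  -- compare (u ++ s :: v) with (u ++ bq :: v) at position m
  rcases lt_trichotomy m u.length with hcase | hcase | hcase
  · have h1 : (u ++ (if e.val = 0 then s0 else if e.val = 1 then s1 else s2) :: v).getD m B.bq = u.getD m B.bq :=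
      List.getD_append _ _ _ _ hcase
    have h2 : (u ++ B.bq :: v).getD m B.bq = u.getD m B.bq := List.getD_append _ _ _ _ hcase
    rw [h1, h2]
    have hmem : u.getD m B.bq ∈ u := by
      rw [List.getD_eq_getElem _ _ hcase]; exact List.getElem_mem _
    exact (delta_ne _ (fun h => hu (h ▸ hmem)) _).symm
  · subst hcase
    have h1 : (u ++ (if e.val = 0 then s0 else if e.val = 1 then s1 else s2) :: v).getD u.length B.bq =
        (if e.val = 0 then s0 else if e.val = 1 then s1 else s2) := by
      rw [List.getD_append_right _ _ _ _ le_rfl]; simp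
    have h2 : (u ++ B.bq :: v).getD u.length B.bq = B.bq := by
      rw [List.getD_append_right _ _ _ _ le_rfl]; simp
    rw [h1, h2, delta_bq]
    rcases e with ⟨ev, he⟩
    interval_cases ev <;> simp [s0, s1, s2]
  · have hk : m - u.length = (m - u.length - 1) + 1 := by omega
    have h1 : (u ++ (if e.val = 0 then s0 else if e.val = 1 then s1 else s2) :: v).getD m B.bq =
        v.getD (m - u.length - 1) B.bq := by
      rw [List.getD_append_right _ _ _ _ hcase.le]
      conv_lhs => rw [hk]
      rw [List.getD_cons_succ]
    have h2 : (u ++ B.bq :: v).getD m B.bq = v.getD (m - u.length - 1) B.bq := by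
      rw [List.getD_append_right _ _ _ _ hcase.le]
      conv_lhs => rw [hk]
      rw [List.getD_cons_succ]
    rw [h1, h2]
    have hmlt : m - u.length - 1 < v.length := by omega
    have hmem : v.getD (m - u.length - 1) B.bq ∈ v := by
      rw [List.getD_eq_getElem _ _ hmlt]; exact List.getElem_mem _
    exact (delta_ne _ (fun h => hv (h ▸ hmem)) _).symm

lemma sum_lt_pow (r : ℕ) (e : Fin r → Fin 3) :
    (∑ i : Fin r, (e i).val * 3 ^ (i : ℕ)) < 3 ^ r := by
  induction r with
  | zero => simp
  | succ r ih =>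
    rw [Fin.sum_univ_castSucc]
    have h1 := ih fun i => e i.castSucc
    have h2 : (e (Fin.last r)).val ≤ 2 := by omega
    have h3 : (e (Fin.last r)).val * 3 ^ r ≤ 2 * 3 ^ r :=
      Nat.mul_le_mul_right _ h2
    have h4 : (3:ℕ) ^ (r+1) = 3 * 3 ^ r := by rw [pow_succ]; ring
    simp only [Fin.coe_castSucc, Fin.val_last] at *
    omega

theorem stmt_0 (r : ℕ) (t : Fin r → A) (e : Fin r → Fin 3) :
    List.foldl delta B.bq (List.ofFn fun i => (t i, e i)) =
      (stewT (List.ofFn t)).getD (∑ i : Fin r, (e i).val * 3 ^ (i : ℕ)) B.bq := by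
  induction r with
  | zero => simp [stewT, Trev]
  | succ r ih =>
    have hofn : (List.ofFn fun i : Fin (r+1) => (t i, e i)) =
        (List.ofFn fun i : Fin r => (t i.castSucc, e i.castSucc)) ++
          [(t (Fin.last r), e (Fin.last r))] := by
      rw [List.ofFn_succ', List.concat_eq_append]
    rw [hofn, List.foldl_append]
    simp only [List.foldl_cons, List.foldl_nil]
    rw [ih (fun i => t i.castSucc) (fun i => e i.castSucc)]
    set tail : List A := (List.ofFn fun i : Fin r => t i.castSucc).reverse with htail
    have htl : tail.length = r := by simp [htail]
    have hrev : (List.ofFn t).reverse = t (Fin.last r) :: tail := by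
      rw [List.ofFn_succ', List.concat_eq_append, List.reverse_append]
      rfl
    have hsum : (∑ i : Fin (r+1), (e i).val * 3 ^ (i : ℕ)) =
        (∑ i : Fin r, (e i.castSucc).val * 3 ^ (i : ℕ)) +
          (e (Fin.last r)).val * 3 ^ r := by
      rw [Fin.sum_univ_castSucc]
      simp
    have hm : (∑ i : Fin r, (e i.castSucc).val * 3 ^ (i : ℕ)) < 3 ^ tail.length := by
      rw [htl]; exact sum_lt_pow r fun i => e i.castSucc
    have hstep := Trev_getD_step tail (t (Fin.last r))
      (∑ i : Fin r, (e i.castSucc).val * 3 ^ (i : ℕ)) (e (Fin.last r)) hm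
    have hT : stewT (List.ofFn t) = Trev (t (Fin.last r) :: tail) := by
      rw [stewT, hrev]
    rw [htl] at hstep
    rw [hT, hsum, hstep]
    rfl
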